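/- arXiv:2507.10784 — 8 statements merged into one kernel-verified Lean document; each statement's English description precedes it below -/
import Mathlib

section
/- For all integers 1 ≤ d ≤ D, every integer n ≥ 1, and every vector v : Y(d,n) → ℝ with Σ_α v_α² = 1, one has Σ_{α,β ∈ Y(d,n)} v_α (M_est(n,d,D))_{αβ} v_β ≤ 1 − (D−d)/(n/d − (d+1)/2 + D + 1). -/
open scoped Classical

noncomputable section

/-- The set `Y(d,n)` of Young diagrams: tuples `α ∈ ℤ^d` with
`α 1 ≥ ⋯ ≥ α d ≥ 0` and `∑ i, α i = n`. -/
def Ydn (d n : ℕ) : Finset (Fin d → ℤ) :=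
  (Fintype.piFinset fun _ => Finset.Icc (0 : ℤ) (n : ℤ)).filter
    (fun α => (∀ i j : Fin d, i ≤ j → α j ≤ α i) ∧ (∀ i, 0 ≤ α i) ∧ (∑ i, α i) = (n : ℤ))

/-- `f(x) = √((x + d + 1)/(x + D + 1))`. -/
def fEst (d D : ℕ) (x : ℝ) : ℝ := Real.sqrt ((x + d + 1) / (x + D + 1))

/-- The `i`-th standard basis vector of `ℤ^d`. -/
def ebasis (d : ℕ) (i : Fin d) : Fin d → ℤ := fun j => if j = i then 1 else 0

/-- The estimation matrix `M_est(n,d,D)`, with 1-based indices `α_i - i` expressed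
through 0-based `Fin d` indices as `α i - (i + 1)`. -/
def Mest (n d D : ℕ) (α β : Fin d → ℤ) : ℝ :=
  (1 / (d : ℝ) ^ 2) * ∑ i : Fin d, ∑ j : Fin d,
    (if α + ebasis d i = β + ebasis d j then (1 : ℝ) else 0)
      * fEst d D ((α i : ℝ) - ((i : ℕ) + 1))
      * fEst d D ((β j : ℝ) - ((j : ℕ) + 1))

def Yext (d n : ℕ) : Finset (Fin d → ℤ) :=
  (Ydn d n).biUnion fun α => Finset.image (fun i => α + ebasis d i) Finset.univ

lemma sum_ebasis (d : ℕ) (i : Fin d) : (∑ j, ebasis d i j) = (1 : ℤ) := by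
  simp [ebasis]

lemma mem_Ydn_props {d n : ℕ} {α : Fin d → ℤ} (h : α ∈ Ydn d n) :
    (∀ i, 0 ≤ α i) ∧ (∑ i, α i) = (n : ℤ) := by
  simp only [Ydn, Finset.mem_filter] at h
  exact ⟨h.2.2.1, h.2.2.2⟩

lemma mem_Yext {d n : ℕ} {γ : Fin d → ℤ} :
    γ ∈ Yext d n ↔ ∃ α ∈ Ydn d n, ∃ i : Fin d, α + ebasis d i = γ := by
  simp [Yext]

lemma Yext_props {d n : ℕ} {γ : Fin d → ℤ} (h : γ ∈ Yext d n) :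
    (∀ i, 0 ≤ γ i) ∧ (∑ i, γ i) = (n : ℤ) + 1 := by
  obtain ⟨α, hα, i, rfl⟩ := mem_Yext.1 h
  obtain ⟨h0, hs⟩ := mem_Ydn_props hα
  refine ⟨fun j => ?_, ?_⟩
  · have := h0 j
    simp only [Pi.add_apply, ebasis]
    split <;> linarith
  · simp only [Pi.add_apply]
    rw [Finset.sum_add_distrib, hs, sum_ebasis]

lemma mem_Yext_of (d n : ℕ) {α : Fin d → ℤ} (h : α ∈ Ydn d n) (i : Fin d) :
    α + ebasis d i ∈ Yext d n := mem_Yext.2 ⟨α, h, i, rfl⟩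

lemma reindexA (d n : ℕ) (W : (Fin d → ℤ) → Fin d → ℝ) :
    ∑ α ∈ Ydn d n, ∑ i : Fin d, W α i
      = ∑ γ ∈ Yext d n, ∑ i : Fin d,
          (if γ - ebasis d i ∈ Ydn d n then W (γ - ebasis d i) i else 0) := by
  rw [Finset.sum_comm, Finset.sum_comm (s := Yext d n)]
  refine Finset.sum_congr rfl fun i _ => ?_
  rw [← Finset.sum_filter]
  have himg : (Yext d n).filter (fun γ => γ - ebasis d i ∈ Ydn d n)
      = (Ydn d n).image (fun α => α + ebasis d i) := by
    ext γ
    simp only [Finset.mem_filter, Finset.mem_image]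
    constructor
    · rintro ⟨-, h⟩
      exact ⟨γ - ebasis d i, h, sub_add_cancel γ (ebasis d i)⟩
    · rintro ⟨α, hα, rfl⟩
      exact ⟨mem_Yext_of d n hα i, by simpa [add_sub_cancel_right] using hα⟩
  rw [himg, Finset.sum_image (fun a _ b _ h => by simpa using add_left_injective (ebasis d i) h)]
  refine Finset.sum_congr rfl fun α _ => ?_
  simp [add_sub_cancel_right]

lemma reindexB (d n : ℕ) (γ : Fin d → ℤ) (G : (Fin d → ℤ) → Fin d → ℝ) :
    ∑ β ∈ Ydn d n, ∑ j : Fin d, (if β + ebasis d j = γ then G β j else 0)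
      = ∑ j : Fin d, (if γ - ebasis d j ∈ Ydn d n then G (γ - ebasis d j) j else 0) := by
  rw [Finset.sum_comm]
  refine Finset.sum_congr rfl fun j _ => ?_
  have h1 : ∀ β, (β + ebasis d j = γ) ↔ (β = γ - ebasis d j) := fun β => by
    rw [eq_sub_iff_add_eq]
  calc ∑ β ∈ Ydn d n, (if β + ebasis d j = γ then G β j else 0)
      = ∑ β ∈ Ydn d n, (if β = γ - ebasis d j then G β j else 0) :=
        Finset.sum_congr rfl fun β _ => by rw [if_congr (h1 β) rfl rfl]
    _ = _ := by rw [Finset.sum_ite_eq' (Ydn d n) (γ - ebasis d j) (fun β => G β j)]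

lemma gauss (m : ℕ) : ∑ i ∈ Finset.range m, (i : ℝ) = m * (m - 1) / 2 := by
  induction m with
  | zero => simp
  | succ k ih => rw [Finset.sum_range_succ, ih]; push_cast; ring

lemma fEst_sq (d D : ℕ) (x : ℝ) (hnum : 0 ≤ x + d + 1) (hden : 0 ≤ x + D + 1) :
    (fEst d D x) ^ 2 = (x + d + 1) / (x + D + 1) :=
  Real.sq_sqrt (div_nonneg hnum hden)

lemma key (d D n : ℕ) (hd : 1 ≤ d) (hdD : d ≤ D) (hn : 1 ≤ n) (γ : Fin d → ℤ)
    (h0 : ∀ i, 0 ≤ γ i) (hs : (∑ i, γ i) = (n : ℤ) + 1) :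
    ∑ i : Fin d, (fEst d D (((γ i : ℝ) - 1) - ((i : ℕ) + 1))) ^ 2
      ≤ d * (1 - ((D : ℝ) - d) / ((n : ℝ) / d - ((d : ℝ) + 1) / 2 + D + 1)) := by
  have hd' : (1 : ℝ) ≤ d := by exact_mod_cast hd
  have hdD' : (d : ℝ) ≤ D := by exact_mod_cast hdD
  have hn' : (1 : ℝ) ≤ n := by exact_mod_cast hn
  have hdpos : (0 : ℝ) < d := by linarith
  set T : ℝ := (n : ℝ) / d - ((d : ℝ) + 1) / 2 + D + 1 with hT
  have hnd : (0 : ℝ) < (n : ℝ) / d := div_pos (by linarith) hdpos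
  have hTpos : 0 < T := by rw [hT]; linarith
  have hγ : ∀ i : Fin d, (0 : ℝ) ≤ (γ i : ℝ) := fun i => by exact_mod_cast h0 i
  have hi : ∀ i : Fin d, ((i : ℕ) : ℝ) ≤ (d : ℝ) - 1 := by
    intro i
    have : (i : ℕ) + 1 ≤ d := i.isLt
    have : ((i : ℕ) : ℝ) + 1 ≤ d := by exact_mod_cast this
    linarith
  have hnum : ∀ i : Fin d, 0 ≤ (((γ i : ℝ) - 1) - ((i : ℕ) + 1)) + d + 1 := by
    intro i; have := hγ i; have := hi i; linarith
  have hden : ∀ i : Fin d, (D : ℝ) - d ≤ (((γ i : ℝ) - 1) - ((i : ℕ) + 1)) + D + 1 := by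
    intro i; have := hγ i; have := hi i; linarith
  by_cases hDd : D = d
  · have hone : ∀ i : Fin d, (fEst d D (((γ i : ℝ) - 1) - ((i : ℕ) + 1))) ^ 2 ≤ 1 := by
      intro i
      rw [fEst_sq d D _ (hnum i) (by have := hden i; linarith)]
      rw [hDd]
      rcases eq_or_lt_of_le (hnum i) with h | h
      · rw [← h]; simp
      · rw [div_self (ne_of_gt h)]
    have hDd' : (D : ℝ) = d := by exact_mod_cast hDd
    have hrhs : (d : ℝ) * (1 - ((D : ℝ) - d) / T) = d := by
      rw [hDd', sub_self, zero_div, sub_zero, mul_one]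
    rw [hrhs]
    calc ∑ i : Fin d, (fEst d D (((γ i : ℝ) - 1) - ((i : ℕ) + 1))) ^ 2
        ≤ ∑ _i : Fin d, (1 : ℝ) := Finset.sum_le_sum fun i _ => hone i
      _ = d := by simp
  · have hdD2 : (d : ℝ) + 1 ≤ D := by
      have : d < D := lt_of_le_of_ne hdD (Ne.symm hDd)
      exact_mod_cast this
    set x : Fin d → ℝ := fun i => (((γ i : ℝ) - 1) - ((i : ℕ) + 1)) + D + 1 with hx
    have hxpos : ∀ i, 0 < x i := fun i => by have := hden i; simp only [hx]; linarith
    -- sum of x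
    have hsx : ∑ i : Fin d, x i = (n : ℝ) + 1 - d + d * D - d * (d - 1) / 2 := by
      have h1 : ∑ i : Fin d, (γ i : ℝ) = (n : ℝ) + 1 := by exact_mod_cast hs
      have h2 : ∑ i : Fin d, ((i : ℕ) : ℝ) = d * (d - 1) / 2 := by
        rw [Fin.sum_univ_eq_sum_range (fun i => (i : ℝ))]; exact gauss d
      have hpt : ∀ i : Fin d, x i = (γ i : ℝ) - ((i : ℕ) : ℝ) + ((D : ℝ) - 1) := by
        intro i; simp only [hx]; ring
      rw [Finset.sum_congr rfl fun i _ => hpt i, Finset.sum_add_distrib,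
        Finset.sum_sub_distrib, h1, h2, Finset.sum_const, Finset.card_univ, Fintype.card_fin]
      ring
    have hsx_pos : 0 < ∑ i : Fin d, x i := by
      have : (0:ℝ) < d * (D - d) + d := by nlinarith
      nlinarith [hsx]
    have hsx_le : ∑ i : Fin d, x i ≤ d * T := by
      have : (d : ℝ) * ((n : ℝ) / d) = n := by field_simp
      rw [hsx, hT]; nlinarith
    -- Cauchy-Schwarz / AM-HM
    have hCS : (d : ℝ) ^ 2 ≤ (∑ i : Fin d, x i) * ∑ i : Fin d, (x i)⁻¹ := by
      have h := Finset.sum_mul_sq_le_sq_mul_sq Finset.univ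
        (fun i => Real.sqrt (x i)) (fun i => (Real.sqrt (x i))⁻¹)
      have e1 : ∑ i : Fin d, Real.sqrt (x i) * (Real.sqrt (x i))⁻¹ = (d : ℝ) := by
        rw [Finset.sum_congr rfl fun i _ =>
          mul_inv_cancel₀ (ne_of_gt (Real.sqrt_pos.2 (hxpos i)))]
        simp
      have e2 : ∀ i : Fin d, (Real.sqrt (x i)) ^ 2 = x i := fun i =>
        Real.sq_sqrt (le_of_lt (hxpos i))
      have e3 : ∀ i : Fin d, ((Real.sqrt (x i))⁻¹) ^ 2 = (x i)⁻¹ := fun i => by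
        rw [inv_pow, e2 i]
      rw [e1] at h
      calc (d : ℝ) ^ 2 ≤ (∑ i : Fin d, (Real.sqrt (x i))^2) * ∑ i : Fin d, ((Real.sqrt (x i))⁻¹)^2 := h
        _ = _ := by rw [Finset.sum_congr rfl fun i _ => e2 i, Finset.sum_congr rfl fun i _ => e3 i]
    have hinv : (d : ℝ) / T ≤ ∑ i : Fin d, (x i)⁻¹ := by
      have h1 : (d : ℝ) ^ 2 / (∑ i : Fin d, x i) ≤ ∑ i : Fin d, (x i)⁻¹ :=
        (div_le_iff₀ hsx_pos).2 (by rw [mul_comm] at hCS ⊢; linarith [hCS])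
      have h2 : (d : ℝ) ^ 2 / (d * T) ≤ (d : ℝ) ^ 2 / (∑ i : Fin d, x i) :=
        div_le_div_of_nonneg_left (by positivity) hsx_pos hsx_le
      have h3 : (d : ℝ) ^ 2 / (d * T) = d / T := by
        rw [pow_two, mul_div_mul_left _ _ (ne_of_gt hdpos)]
      linarith
    -- rewrite each term
    have hterm : ∀ i : Fin d, (fEst d D (((γ i : ℝ) - 1) - ((i : ℕ) + 1))) ^ 2
        = 1 - ((D : ℝ) - d) / x i := by
      intro i
      rw [fEst_sq d D _ (hnum i) (le_of_lt (by have := hden i; linarith))]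
      have hxne : x i ≠ 0 := ne_of_gt (hxpos i)
      have e1 : (((γ i : ℝ) - 1) - ((i : ℕ) + 1)) + d + 1 = x i - ((D : ℝ) - d) := by
        simp only [hx]; ring
      have e2 : (((γ i : ℝ) - 1) - ((i : ℕ) + 1)) + D + 1 = x i := by
        simp only [hx]
      rw [e1, e2, sub_div, div_self hxne]
    rw [Finset.sum_congr rfl fun i _ => hterm i, Finset.sum_sub_distrib]
    have hcard : ∑ _i : Fin d, (1 : ℝ) = d := by simp
    rw [hcard]
    have h4 : ∑ i : Fin d, ((D : ℝ) - d) / x i = ((D : ℝ) - d) * ∑ i : Fin d, (x i)⁻¹ := by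
      rw [Finset.mul_sum]; exact Finset.sum_congr rfl fun i _ => (div_eq_mul_inv _ _)
    rw [h4]
    have h5 : ((D : ℝ) - d) * ((d : ℝ) / T) ≤ ((D : ℝ) - d) * ∑ i : Fin d, (x i)⁻¹ :=
      mul_le_mul_of_nonneg_left hinv (by linarith)
    have h6 : (d : ℝ) * (1 - ((D : ℝ) - d) / T) = d - ((D : ℝ) - d) * ((d : ℝ) / T) := by
      ring
    rw [h6]
    linarith


lemma sub_ebasis_apply {d : ℕ} (γ : Fin d → ℤ) (j : Fin d) :
    ((γ - ebasis d j) j : ℝ) = (γ j : ℝ) - 1 := by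
  simp [ebasis]


/-- The quadratic form of the estimation matrix on any unit vector is at most
`1 - (D-d)/(n/d - (d+1)/2 + D + 1)`. -/
theorem stmt1 (d D : ℕ) (hd : 1 ≤ d) (hdD : d ≤ D) (n : ℕ) (hn : 1 ≤ n)
    (v : (Fin d → ℤ) → ℝ) (hv : (∑ α ∈ Ydn d n, (v α) ^ 2) = 1) :
    ∑ α ∈ Ydn d n, ∑ β ∈ Ydn d n, v α * Mest n d D α β * v β
      ≤ 1 - ((D : ℝ) - (d : ℝ)) / ((n : ℝ) / (d : ℝ) - ((d : ℝ) + 1) / 2 + (D : ℝ) + 1) := by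
  have hdpos : (0 : ℝ) < d := by exact_mod_cast hd
  set C : ℝ := 1 - ((D : ℝ) - (d : ℝ)) / ((n : ℝ) / (d : ℝ) - ((d : ℝ) + 1) / 2 + (D : ℝ) + 1)
    with hC
  set F : (Fin d → ℤ) → Fin d → ℝ :=
    fun γ i => fEst d D (((γ i : ℝ) - 1) - ((i : ℕ) + 1)) with hF
  set u : (Fin d → ℤ) → Fin d → ℝ :=
    fun γ i => if γ - ebasis d i ∈ Ydn d n then v (γ - ebasis d i) else 0 with hu
  set S : (Fin d → ℤ) → ℝ := fun γ => ∑ i : Fin d, F γ i * u γ i with hS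
  -- Step A: quadratic form equals (1/d²) ∑_γ (S γ)²
  have expand : ∀ α β : Fin d → ℤ, v α * Mest n d D α β * v β
      = (1 / (d : ℝ) ^ 2) * ∑ i : Fin d, ∑ j : Fin d,
          (if β + ebasis d j = α + ebasis d i
           then (v α * fEst d D ((α i : ℝ) - ((i : ℕ) + 1)))
              * (v β * fEst d D ((β j : ℝ) - ((j : ℕ) + 1)))
           else 0) := by
    intro α β
    simp only [Mest, Finset.mul_sum, Finset.sum_mul]
    refine Finset.sum_congr rfl fun i _ => Finset.sum_congr rfl fun j _ => ?_
    by_cases h : α + ebasis d i = β + ebasis d j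
    · rw [if_pos h, if_pos h.symm]; ring
    · rw [if_neg h, if_neg (fun h' => h h'.symm)]; ring
  have stepA : ∑ α ∈ Ydn d n, ∑ β ∈ Ydn d n, v α * Mest n d D α β * v β
      = (1 / (d : ℝ) ^ 2) * ∑ γ ∈ Yext d n, (S γ) ^ 2 := by
    rw [Finset.sum_congr rfl fun α _ => Finset.sum_congr rfl fun β _ => expand α β]
    simp only [← Finset.mul_sum]
    congr 1
    set W : (Fin d → ℤ) → Fin d → ℝ := fun α i =>
      (v α * fEst d D ((α i : ℝ) - ((i : ℕ) + 1)))
        * ∑ β ∈ Ydn d n, ∑ j : Fin d,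
            (if β + ebasis d j = α + ebasis d i
             then v β * fEst d D ((β j : ℝ) - ((j : ℕ) + 1)) else 0) with hW
    have claim1 : ∑ α ∈ Ydn d n, ∑ β ∈ Ydn d n, ∑ i : Fin d, ∑ j : Fin d,
        (if β + ebasis d j = α + ebasis d i
         then (v α * fEst d D ((α i : ℝ) - ((i : ℕ) + 1)))
            * (v β * fEst d D ((β j : ℝ) - ((j : ℕ) + 1)))
         else 0)
        = ∑ α ∈ Ydn d n, ∑ i : Fin d, W α i := by
      refine Finset.sum_congr rfl fun α _ => ?_
      rw [Finset.sum_comm]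
      refine Finset.sum_congr rfl fun i _ => ?_
      simp only [hW, Finset.mul_sum]
      refine Finset.sum_congr rfl fun β _ => Finset.sum_congr rfl fun j _ => ?_
      split_ifs <;> ring
    rw [claim1, reindexA d n W]
    refine Finset.sum_congr rfl fun γ hγ => ?_
    have hSg : ∀ i : Fin d,
        (if γ - ebasis d i ∈ Ydn d n then W (γ - ebasis d i) i else 0)
          = (F γ i * u γ i) * S γ := by
      intro i
      have hadd : (γ - ebasis d i) + ebasis d i = γ := sub_add_cancel γ (ebasis d i)
      have hinner : (∑ β ∈ Ydn d n, ∑ j : Fin d,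
          (if β + ebasis d j = (γ - ebasis d i) + ebasis d i
           then v β * fEst d D ((β j : ℝ) - ((j : ℕ) + 1)) else 0)) = S γ := by
        rw [hadd, reindexB d n γ (fun β j => v β * fEst d D ((β j : ℝ) - ((j : ℕ) + 1)))]
        refine Finset.sum_congr rfl fun j _ => ?_
        simp only [hS, hF, hu]
        split_ifs with h
        · rw [sub_ebasis_apply γ j]; ring
        · ring
      simp only [hW, hinner, sub_ebasis_apply γ i]
      simp only [hu, hF]
      split_ifs with h
      · ring
      · ring
    rw [Finset.sum_congr rfl fun i _ => hSg i, ← Finset.sum_mul]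
    simp only [hS]; rw [sq]
  rw [stepA]
  -- Step B/C: bound the sum
  have stepB : ∑ γ ∈ Yext d n, (S γ) ^ 2
      ≤ ∑ γ ∈ Yext d n, ((d : ℝ) * C) * (∑ i : Fin d, (u γ i) ^ 2) := by
    refine Finset.sum_le_sum fun γ hγ => ?_
    have hcs := Finset.sum_mul_sq_le_sq_mul_sq Finset.univ (F γ) (u γ)
    have hkey : ∑ i : Fin d, (F γ i) ^ 2 ≤ (d : ℝ) * C := by
      obtain ⟨h0, hsum⟩ := Yext_props hγ
      exact key d D n hd hdD hn γ h0 hsum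
    calc (S γ) ^ 2 ≤ (∑ i : Fin d, (F γ i) ^ 2) * ∑ i : Fin d, (u γ i) ^ 2 := hcs
      _ ≤ ((d : ℝ) * C) * (∑ i : Fin d, (u γ i) ^ 2) :=
          mul_le_mul_of_nonneg_right hkey (by positivity)
  have stepC : ∑ γ ∈ Yext d n, (∑ i : Fin d, (u γ i) ^ 2) = (d : ℝ) := by
    have h1 := reindexA d n (fun α _ => (v α) ^ 2)
    have h2 : ∀ γ : Fin d → ℤ, ∀ i : Fin d,
        (u γ i) ^ 2 = (if γ - ebasis d i ∈ Ydn d n then (v (γ - ebasis d i)) ^ 2 else 0) := by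
      intro γ i
      simp only [hu]
      split_ifs <;> simp
    rw [Finset.sum_congr rfl fun γ _ => Finset.sum_congr rfl fun i _ => h2 γ i, ← h1]
    rw [Finset.sum_congr rfl fun α _ => (Finset.sum_const ((v α)^2))]
    simp only [Finset.card_univ, Fintype.card_fin, nsmul_eq_mul]
    rw [← Finset.mul_sum, hv, mul_one]
  have final : ∑ γ ∈ Yext d n, ((d : ℝ) * C) * (∑ i : Fin d, (u γ i) ^ 2)
      = ((d : ℝ) * C) * (d : ℝ) := by
    rw [← Finset.mul_sum, stepC]
  have : (1 / (d : ℝ) ^ 2) * ∑ γ ∈ Yext d n, (S γ) ^ 2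
      ≤ (1 / (d : ℝ) ^ 2) * (((d : ℝ) * C) * (d : ℝ)) := by
    refine mul_le_mul_of_nonneg_left ?_ (by positivity)
    rw [← final]; exact stepB
  calc (1 / (d : ℝ) ^ 2) * ∑ γ ∈ Yext d n, (S γ) ^ 2
      ≤ (1 / (d : ℝ) ^ 2) * (((d : ℝ) * C) * (d : ℝ)) := this
    _ = C := by field_simp
end
end

section
/- For all integers 1 ≤ d ≤ D, every integer n ≥ 1, and every α ∈ Y(d,n), the row sum of the estimation matrix satisfies Σ_{β ∈ Y(d,n)} (M_est(n,d,D))_{αβ} ≤ ( (1/d) · Σ_{i=1}^{d} f(α_i − i) )². -/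
open scoped Classical

noncomputable section

lemma fEst_nonneg (d D : ℕ) (x : ℝ) : 0 ≤ fEst d D x := Real.sqrt_nonneg _

lemma fEst_mono (d D : ℕ) (hdD : d ≤ D) {x y : ℝ} (hy : y ≤ x)
    (h0 : 0 < y + D + 1) (h1 : 0 ≤ y + d + 1) : fEst d D y ≤ fEst d D x := by
  unfold fEst
  apply Real.sqrt_le_sqrt
  have hx0 : 0 < x + D + 1 := by linarith
  rw [div_le_div_iff₀ h0 hx0]
  have hdD' : (d : ℝ) ≤ D := by exact_mod_cast hdD
  nlinarith

/-- Row sums of the estimation matrix are bounded by the squared `f`-average. -/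
theorem stmt2 (d D : ℕ) (hd : 1 ≤ d) (hdD : d ≤ D) (n : ℕ) (hn : 1 ≤ n)
    (α : Fin d → ℤ) (hα : α ∈ Ydn d n) :
    ∑ β ∈ Ydn d n, Mest n d D α β
      ≤ ((1 / (d : ℝ)) * ∑ i : Fin d, fEst d D ((α i : ℝ) - ((i : ℕ) + 1))) ^ 2 := by
  have hRHS : ((1 / (d : ℝ)) * ∑ i : Fin d, fEst d D ((α i : ℝ) - ((i : ℕ) + 1))) ^ 2
      = (1 / (d : ℝ) ^ 2) * ∑ i : Fin d, ∑ j : Fin d,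
          fEst d D ((α i : ℝ) - ((i : ℕ) + 1)) * fEst d D ((α j : ℝ) - ((j : ℕ) + 1)) := by
    rw [mul_pow, sq (∑ i : Fin d, fEst d D ((α i : ℝ) - ((i : ℕ) + 1))),
      Finset.sum_mul_sum, one_div_pow]
  rw [hRHS]
  unfold Mest
  rw [← Finset.mul_sum]
  apply mul_le_mul_of_nonneg_left _ (by positivity)
  conv_lhs => rw [Finset.sum_comm]
  apply Finset.sum_le_sum
  intro i _
  conv_lhs => rw [Finset.sum_comm]
  apply Finset.sum_le_sum
  intro j _
  set c : Fin d → ℤ := α + ebasis d i - ebasis d j with hc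
  have hAnn : 0 ≤ fEst d D ((α i : ℝ) - ((i : ℕ) + 1)) := fEst_nonneg _ _ _
  calc ∑ β ∈ Ydn d n,
        (if α + ebasis d i = β + ebasis d j then (1 : ℝ) else 0)
          * fEst d D ((α i : ℝ) - ((i : ℕ) + 1))
          * fEst d D ((β j : ℝ) - ((j : ℕ) + 1))
      = ∑ β ∈ Ydn d n, (if β = c then
          fEst d D ((α i : ℝ) - ((i : ℕ) + 1))
            * fEst d D ((β j : ℝ) - ((j : ℕ) + 1)) else 0) := by
        refine Finset.sum_congr rfl fun β _ => ?_
        by_cases h : β = c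
        · subst h
          rw [if_pos (by rw [hc]; abel), if_pos rfl, one_mul]
        · rw [if_neg h, if_neg fun h' => h (eq_sub_of_add_eq h'.symm), zero_mul, zero_mul]
    _ = if c ∈ Ydn d n then
          fEst d D ((α i : ℝ) - ((i : ℕ) + 1))
            * fEst d D ((c j : ℝ) - ((j : ℕ) + 1)) else 0 :=
        Finset.sum_ite_eq' (Ydn d n) c _
    _ ≤ fEst d D ((α i : ℝ) - ((i : ℕ) + 1)) * fEst d D ((α j : ℝ) - ((j : ℕ) + 1)) := by
        split_ifs with hmem
        · refine mul_le_mul_of_nonneg_left ?_ hAnn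
          have hc0 : 0 ≤ c j := by
            simp only [Ydn, Finset.mem_filter] at hmem
            exact hmem.2.2.1 j
          have hcle : c j ≤ α j := by
            simp only [hc, Pi.sub_apply, Pi.add_apply, ebasis]
            split_ifs <;> omega
          have hj : ((j : ℕ) : ℝ) < d := by exact_mod_cast j.isLt
          have hdD' : (d : ℝ) ≤ D := by exact_mod_cast hdD
          have hc0' : (0 : ℝ) ≤ (c j : ℤ) := by exact_mod_cast hc0
          have hcle' : ((c j : ℤ) : ℝ) ≤ ((α j : ℤ) : ℝ) := by exact_mod_cast hcle
          apply fEst_mono d D hdD (by push_cast at hcle' ⊢; linarith) (by push_cast; linarith)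
            (by push_cast; linarith)
        · exact mul_nonneg hAnn (fEst_nonneg _ _ _)
end
end

section
/- For all integers 1 ≤ d ≤ D, every integer n ≥ 0, and every α ∈ Y(d,n): (1/d) · Σ_{i=1}^{d} √((α_i − i + d + 1)/(α_i − i + D + 1)) ≤ √((n/d + (d+1)/2)/(n/d − (d+1)/2 + D + 1)). (This is the Jensen step f-average ≤ f(n/d − (d+1)/2), using that Σ_i (α_i − i) = n − d(d+1)/2.) -/
/-
For `a ≤ b` the map `x ↦ (x + a)/(x + b) = 1 - (b - a)/(x + b)` is concave, and composing with the
concave increasing `√` keeps it concave on `x > -a`. The bound is then Jensen's inequality at the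
points `α_i - i`, whose mean is `n/d - (d + 1)/2`.
-/

open scoped Classical

noncomputable section

open Set

lemma concaveOn_add_div_add {a b : ℝ} (hab : a ≤ b) :
    ConcaveOn ℝ (Ioi (-b)) fun x => (x + a) / (x + b) := by
  have hinv : ConvexOn ℝ (Ioi (-b)) fun x => (x + b)⁻¹ := by
    have h := (convexOn_zpow (𝕜 := ℝ) (-1)).translate_left b
    rw [show (fun z => b + z) ⁻¹' Ioi 0 = Ioi (-b) by ext; simp [neg_lt_iff_pos_add']] at h
    exact h.congr fun x _ => by simp
  refine ((concaveOn_const 1 (convex_Ioi _)).sub (hinv.smul (sub_nonneg.2 hab))).congr ?_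
  intro x hx
  have : x + b ≠ 0 := by rw [mem_Ioi] at hx; linarith
  simp only [Pi.sub_apply, smul_eq_mul]
  field_simp
  ring

lemma concaveOn_sqrt_add_div_add {a b : ℝ} (hab : a ≤ b) :
    ConcaveOn ℝ (Ioi (-a)) fun x => √((x + a) / (x + b)) := by
  have hg := (concaveOn_add_div_add hab).subset (Ioi_subset_Ioi (neg_le_neg hab)) (convex_Ioi _)
  have hg0 : ∀ x ∈ Ioi (-a), (x + a) / (x + b) ∈ Ici (0 : ℝ) := fun x hx => by
    simp only [mem_Ioi, mem_Ici] at hx ⊢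
    exact div_nonneg (by linarith) (by linarith)
  refine ⟨convex_Ioi _, fun x hx y hy p q hp hq hpq => ?_⟩
  calc p • √((x + a) / (x + b)) + q • √((y + a) / (y + b))
      ≤ √(p • ((x + a) / (x + b)) + q • ((y + a) / (y + b))) :=
        Real.strictConcaveOn_sqrt.concaveOn.2 (hg0 x hx) (hg0 y hy) hp hq hpq
    _ ≤ √((p • x + q • y + a) / (p • x + q • y + b)) :=
        Real.sqrt_le_sqrt (hg.2 hx hy hp hq hpq)

lemma sum_fin_val_add_one (d : ℕ) : ∑ i : Fin d, ((i : ℕ) + 1 : ℝ) = d * (d + 1) / 2 := by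
  induction d with
  | zero => simp
  | succ d ih =>
    rw [Fin.sum_univ_castSucc]
    simp only [Fin.val_castSucc, Fin.val_last, ih]
    push_cast
    ring

/-- The Jensen step: the average of `f(α_i - i)` over `i = 1, …, d` is at most
`f(n/d - (d+1)/2) = √((n/d + (d+1)/2)/(n/d - (d+1)/2 + D + 1))`. -/
theorem stmt3 (d D : ℕ) (hd : 1 ≤ d) (hdD : d ≤ D) (n : ℕ)
    (α : Fin d → ℤ) (hα : α ∈ Ydn d n) :
    (1 / (d : ℝ)) * ∑ i : Fin d,
        Real.sqrt (((α i : ℝ) - ((i : ℕ) + 1) + (d : ℝ) + 1)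
          / ((α i : ℝ) - ((i : ℕ) + 1) + (D : ℝ) + 1))
      ≤ Real.sqrt (((n : ℝ) / (d : ℝ) + ((d : ℝ) + 1) / 2)
          / ((n : ℝ) / (d : ℝ) - ((d : ℝ) + 1) / 2 + (D : ℝ) + 1)) := by
  obtain ⟨-, -, hα_nonneg, hα_sum⟩ := Finset.mem_filter.mp hα
  have hd0 : (d : ℝ) ≠ 0 := by positivity
  set x : Fin d → ℝ := fun i => (α i : ℝ) - ((i : ℕ) + 1)
  have hx : ∀ i ∈ Finset.univ, x i ∈ Ioi (-((d : ℝ) + 1)) := fun i _ => by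
    have h1 : (0 : ℝ) ≤ α i := by exact_mod_cast hα_nonneg i
    have h2 : ((i : ℕ) : ℝ) + 1 ≤ d := by exact_mod_cast i.isLt
    simp only [x, mem_Ioi]
    linarith
  have hmean : ∑ i, (1 / (d : ℝ)) • x i = n / d - (d + 1) / 2 := by
    have hα_sum' : ∑ i, (α i : ℝ) = n := by exact_mod_cast hα_sum
    simp only [x, smul_eq_mul, ← Finset.mul_sum, Finset.sum_sub_distrib, hα_sum',
      sum_fin_val_add_one]
    field_simp
  have hjensen := (concaveOn_sqrt_add_div_add (a := d + 1) (b := D + 1) (by gcongr)).le_map_sum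
    (w := fun _ => 1 / (d : ℝ)) (fun _ _ => by positivity) (by simp [hd0]) hx
  rw [hmean] at hjensen
  simp only [smul_eq_mul, ← Finset.mul_sum] at hjensen
  calc _ = 1 / (d : ℝ) * ∑ i, √((x i + (d + 1)) / (x i + (D + 1))) := by simp only [x, add_assoc]
    _ ≤ _ := hjensen
    _ = _ := by ring_nf
end
end

section
/- Given integers d ≥ 2, n ≥ 1 and N ≥ 1 with 3(d−1)N/2 ≤ n/d + d − 2, write n − d(d−1)N/2 = dq + r with integers q ≥ 0 and 0 ≤ r ≤ d−1, and set A_i := q + (d−i)N + [i ≤ r] for 1 ≤ i ≤ d−1. For each ᾱ ∈ {0,1,…,N−1}^{d−1}, the tuple α(ᾱ) ∈ ℤ^d defined by α(ᾱ)_i := A_i + ᾱ_i for 1 ≤ i ≤ d−1 and α(ᾱ)_d := n − Σ_{i=1}^{d−1} α(ᾱ)_i satisfies α(ᾱ)_1 > α(ᾱ)_2 > … > α(ᾱ)_d ≥ 0; in particular α(ᾱ) ∈ Y(d,n). Moreover the map ᾱ ↦ α(ᾱ) is injective, so its image S_Young has exactly N^{d−1} elements. -/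
open scoped Classical

noncomputable section

/-- `A_i = q + (d - i) N + [i ≤ r]` for the 1-based index `i`; here the argument `i`
is 0-based, so the 1-based index is `i + 1`. -/
def Ai (d N : ℕ) (q r : ℤ) (i : ℕ) : ℤ :=
  q + ((d : ℤ) - ((i : ℤ) + 1)) * (N : ℤ) + (if (i : ℤ) + 1 ≤ r then 1 else 0)

/-- The map `ᾱ ↦ α(ᾱ)` of the `S_Young` construction: `α(ᾱ)_i = A_i + ᾱ_i` for
`i ≤ d - 1` (1-based) and `α(ᾱ)_d = n - ∑_{i<d} α(ᾱ)_i`. -/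
def alphaMap (d n N : ℕ) (q r : ℤ) (bar : Fin (d - 1) → ℤ) : Fin d → ℤ :=
  fun i => if h : (i : ℕ) < d - 1 then Ai d N q r i + bar ⟨i, h⟩
           else (n : ℤ) - ∑ j : Fin (d - 1), (Ai d N q r j + bar j)

/-- The index set `{0, 1, …, N-1}^{d-1}`. -/
def barSet (d N : ℕ) : Finset (Fin (d - 1) → ℤ) :=
  Fintype.piFinset fun _ => Finset.Icc (0 : ℤ) ((N : ℤ) - 1)

/-!
The `A_i` are chosen so that `∑_{i<d} A_i = n - q`; hence the last entry of `α(ᾱ)` is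
`q - ∑ ᾱ_i`. Consecutive `A_i` drop by at least `N` while the `ᾱ_i` vary by less than `N`,
so the first `d - 1` entries strictly decrease, and entry `d - 1` is at least `q + N`, above
the last one. The size assumption on `n` forces `q ≥ (d - 1)(N - 1) ≥ ∑ ᾱ_i`, which makes the
last entry nonnegative. Injectivity is read off the first `d - 1` coordinates.
-/

open Finset

lemma Ai_add_one_add_le (d N : ℕ) (q r : ℤ) (i : ℕ) : Ai d N q r (i + 1) + N ≤ Ai d N q r i := by
  simp only [Ai]; push_cast; split_ifs <;> linarith

lemma add_le_Ai {d : ℕ} (N : ℕ) (q r : ℤ) {i : ℕ} (hi : i + 1 < d) : q + N ≤ Ai d N q r i := by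
  have hdi : (1 : ℤ) ≤ d - (i + 1) := by omega
  simp only [Ai]
  split_ifs <;> nlinarith [Int.natCast_nonneg N]

lemma sum_ite_add_one_le_eq_min {r : ℤ} (hr : 0 ≤ r) :
    ∀ e : ℕ, ∑ j : Fin e, (if ((j : ℕ) : ℤ) + 1 ≤ r then (1 : ℤ) else 0) = min (e : ℤ) r
  | 0 => by simp [hr]
  | e + 1 => by
    simp only [Fin.sum_univ_castSucc, Fin.val_castSucc, Fin.val_last,
      sum_ite_add_one_le_eq_min hr e]
    push_cast
    split_ifs <;> omega

lemma two_mul_sum_sub_val : ∀ e : ℕ, 2 * ∑ j : Fin e, ((e : ℤ) - j) = e * (e + 1)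
  | 0 => by simp
  | e + 1 => by
    have ih := two_mul_sum_sub_val e
    simp only [Fin.sum_univ_succ, Fin.val_zero, Fin.val_succ]
    push_cast
    simp only [add_sub_add_right_eq_sub]
    linarith

lemma two_mul_sum_Ai {e N : ℕ} {q r : ℤ} (hr0 : 0 ≤ r) (hr1 : r ≤ e) :
    2 * ∑ j : Fin e, Ai (e + 1) N q r j = 2 * (e * q + r) + e * (e + 1) * N := by
  have hA : ∀ j : Fin e, Ai (e + 1) N q r j
      = q + ((e : ℤ) - j) * N + (if ((j : ℕ) : ℤ) + 1 ≤ r then 1 else 0) := by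
    intro j; simp only [Ai]; push_cast; ring
  simp only [hA, sum_add_distrib, ← sum_mul, sum_const, card_univ, Fintype.card_fin,
    sum_ite_add_one_le_eq_min hr0, min_eq_right hr1, nsmul_eq_mul]
  linear_combination (N : ℤ) * two_mul_sum_sub_val e

lemma sub_one_mul_sub_one_le {d n N : ℕ} {q r : ℤ}
    (h1 : 3 * ((d : ℝ) - 1) * (N : ℝ) / 2 ≤ (n : ℝ) / (d : ℝ) + (d : ℝ) - 2)
    (hr0 : 0 ≤ r) (hr1 : r ≤ (d : ℤ) - 1)
    (hqr : 2 * (n : ℤ) = (d : ℤ) * ((d : ℤ) - 1) * (N : ℤ) + 2 * ((d : ℤ) * q + r)) :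
    ((d : ℤ) - 1) * (N - 1) ≤ q := by
  have hd : (1 : ℤ) ≤ d := by omega
  have hdR : (0 : ℝ) < d := by exact_mod_cast hd
  have hR : 3 * (d : ℝ) * (d - 1) * N ≤ 2 * n + 2 * d * (d - 2) := by
    nlinarith [mul_le_mul_of_nonneg_right h1 hdR.le, div_mul_cancel₀ (n : ℝ) hdR.ne']
  have hZ : 3 * (d : ℤ) * (d - 1) * N ≤ 2 * n + 2 * d * (d - 2) := by exact_mod_cast hR
  by_contra! h
  nlinarith [mul_le_mul_of_nonneg_left (show q + 1 ≤ (d - 1) * (N - 1) by omega)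
    (by omega : (0 : ℤ) ≤ d)]

lemma mem_barSet {d N : ℕ} {bar : Fin (d - 1) → ℤ} :
    bar ∈ barSet d N ↔ ∀ j, 0 ≤ bar j ∧ bar j ≤ N - 1 := by
  simp [barSet]

section alphaMap

variable {e n N : ℕ} {q r : ℤ}

lemma alphaMap_castSucc (bar : Fin e → ℤ) (i : Fin e) :
    alphaMap (e + 1) n N q r bar i.castSucc = Ai (e + 1) N q r i + bar i := by
  simp [alphaMap]

lemma alphaMap_last_eq_sub_sum (bar : Fin e → ℤ) :
    alphaMap (e + 1) n N q r bar (Fin.last e) =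
      n - ∑ j : Fin e, (Ai (e + 1) N q r j + bar j) := by
  simp [alphaMap]

lemma sum_alphaMap (bar : Fin e → ℤ) : ∑ i, alphaMap (e + 1) n N q r bar i = n := by
  simp only [Fin.sum_univ_castSucc, alphaMap_castSucc, alphaMap_last_eq_sub_sum]
  ring

lemma alphaMap_injective : Function.Injective (alphaMap (e + 1) n N q r) := by
  intro bar bar' h
  funext j
  simpa only [alphaMap_castSucc, add_right_inj] using congrFun h j.castSucc

lemma alphaMap_last (hr0 : 0 ≤ r) (hr1 : r ≤ e)
    (hqr : 2 * (n : ℤ) = (e + 1) * e * N + 2 * ((e + 1) * q + r)) (bar : Fin e → ℤ) :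
    alphaMap (e + 1) n N q r bar (Fin.last e) = q - ∑ j, bar j := by
  have := two_mul_sum_Ai (N := N) (q := q) hr0 hr1
  rw [alphaMap_last_eq_sub_sum, sum_add_distrib]
  linarith

lemma strictAnti_alphaMap (hr0 : 0 ≤ r) (hr1 : r ≤ e)
    (hqr : 2 * (n : ℤ) = (e + 1) * e * N + 2 * ((e + 1) * q + r))
    {bar : Fin e → ℤ} (hbar : bar ∈ barSet (e + 1) N) :
    StrictAnti (alphaMap (e + 1) n N q r bar) := by
  have hb : ∀ j : Fin e, 0 ≤ bar j ∧ bar j ≤ N - 1 := mem_barSet.mp hbar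
  rw [Fin.strictAnti_iff_succ_lt]
  intro i
  by_cases hi : (i : ℕ) + 1 < e
  · have hsucc : i.succ = (⟨i + 1, hi⟩ : Fin e).castSucc := rfl
    rw [hsucc, alphaMap_castSucc, alphaMap_castSucc]
    linarith [Ai_add_one_add_le (e + 1) N q r i, hb i, hb ⟨i + 1, hi⟩]
  · have hsucc : i.succ = Fin.last e := Fin.ext (by simp only [Fin.val_succ, Fin.val_last]; omega)
    rw [hsucc, alphaMap_castSucc, alphaMap_last hr0 hr1 hqr]
    linarith [add_le_Ai (d := e + 1) N q r (i := i) (by omega), hb i,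
      sum_nonneg fun j (_ : j ∈ univ) => (hb j).1]

lemma alphaMap_nonneg (hr0 : 0 ≤ r) (hr1 : r ≤ e)
    (hqr : 2 * (n : ℤ) = (e + 1) * e * N + 2 * ((e + 1) * q + r))
    (hq : (e : ℤ) * (N - 1) ≤ q) {bar : Fin e → ℤ}
    (hbar : bar ∈ barSet (e + 1) N) (i : Fin (e + 1)) : 0 ≤ alphaMap (e + 1) n N q r bar i := by
  have hsum : ∑ j, bar j ≤ e * (N - 1) := by
    simpa [mul_sub] using sum_le_sum fun j (_ : j ∈ univ) => (mem_barSet.mp hbar j).2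
  calc 0 ≤ alphaMap (e + 1) n N q r bar (Fin.last e) := by
        rw [alphaMap_last hr0 hr1 hqr]; linarith
    _ ≤ alphaMap (e + 1) n N q r bar i := (strictAnti_alphaMap hr0 hr1 hqr hbar).antitone i.le_last

end alphaMap

lemma mem_Ydn_of_antitone {d n : ℕ} {α : Fin d → ℤ} (hα : Antitone α) (hα0 : ∀ i, 0 ≤ α i)
    (hsum : ∑ i, α i = n) : α ∈ Ydn d n := by
  simp only [Ydn, mem_filter, Fintype.mem_piFinset, mem_Icc]
  exact ⟨fun i => ⟨hα0 i, hsum ▸ single_le_sum (fun j _ => hα0 j) (mem_univ i)⟩,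
    fun i j hij => hα hij, hα0, hsum⟩

lemma card_barSet (d N : ℕ) : (barSet d N).card = N ^ (d - 1) := by
  simp [barSet]

theorem stmt6_general (d n N : ℕ)
    (h1 : 3 * ((d : ℝ) - 1) * (N : ℝ) / 2 ≤ (n : ℝ) / (d : ℝ) + (d : ℝ) - 2)
    (q r : ℤ) (hr0 : 0 ≤ r) (hr1 : r ≤ (d : ℤ) - 1)
    (hqr : 2 * (n : ℤ) = (d : ℤ) * ((d : ℤ) - 1) * (N : ℤ) + 2 * ((d : ℤ) * q + r)) :
    (∀ bar ∈ barSet d N,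
        (∀ i j : Fin d, i < j → alphaMap d n N q r bar j < alphaMap d n N q r bar i) ∧
        (∀ i : Fin d, 0 ≤ alphaMap d n N q r bar i) ∧
        alphaMap d n N q r bar ∈ Ydn d n) ∧
      Set.InjOn (alphaMap d n N q r) (barSet d N : Set (Fin (d - 1) → ℤ)) ∧
      ((barSet d N).image (alphaMap d n N q r)).card = N ^ (d - 1) := by
  have hq := sub_one_mul_sub_one_le h1 hr0 hr1 hqr
  obtain ⟨e, rfl⟩ : ∃ e, d = e + 1 := ⟨d - 1, by omega⟩
  push_cast [add_sub_cancel_right] at hq hr1 hqr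
  have hanti : ∀ bar ∈ barSet (e + 1) N, StrictAnti (alphaMap (e + 1) n N q r bar) :=
    fun _ => strictAnti_alphaMap hr0 hr1 hqr
  have hnonneg : ∀ bar ∈ barSet (e + 1) N, ∀ i, 0 ≤ alphaMap (e + 1) n N q r bar i :=
    fun _ => alphaMap_nonneg hr0 hr1 hqr hq
  refine ⟨fun bar hbar => ⟨fun _ _ hij => hanti bar hbar hij, hnonneg bar hbar,
    mem_Ydn_of_antitone (hanti bar hbar).antitone (hnonneg bar hbar) (sum_alphaMap bar)⟩,
    alphaMap_injective.injOn, ?_⟩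
  rw [card_image_of_injective _ alphaMap_injective, card_barSet]

/-- The `S_Young` construction produces strictly decreasing nonnegative Young diagrams
in `Y(d,n)`, the map `ᾱ ↦ α(ᾱ)` is injective, and its image has `N^(d-1)` elements. -/
theorem stmt6 (d n N : ℕ) (hd : 2 ≤ d) (hn : 1 ≤ n) (hN : 1 ≤ N)
    (h1 : 3 * ((d : ℝ) - 1) * (N : ℝ) / 2 ≤ (n : ℝ) / (d : ℝ) + (d : ℝ) - 2)
    (q r : ℤ) (hq : 0 ≤ q) (hr0 : 0 ≤ r) (hr1 : r ≤ (d : ℤ) - 1)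
    (hqr : 2 * (n : ℤ) = (d : ℤ) * ((d : ℤ) - 1) * (N : ℤ) + 2 * ((d : ℤ) * q + r)) :
    (∀ bar ∈ barSet d N,
        (∀ i j : Fin d, i < j → alphaMap d n N q r bar j < alphaMap d n N q r bar i) ∧
        (∀ i : Fin d, 0 ≤ alphaMap d n N q r bar i) ∧
        alphaMap d n N q r bar ∈ Ydn d n) ∧
      Set.InjOn (alphaMap d n N q r) (barSet d N : Set (Fin (d - 1) → ℤ)) ∧
      ((barSet d N).image (alphaMap d n N q r)).card = N ^ (d - 1) :=
  stmt6_general d n N h1 q r hr0 hr1 hqr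
end
end

section
/- For every integer N ≥ 2, with g_k := (2/N)·sin²(π(2k+1)/(2N)) for k = 0,…,N−1, one has Σ_{k=0}^{N−2} √(g_k · g_{k+1}) = 1 − ((N−1)/N)·(1 − cos(π/N)). -/
open Real Finset

lemma sumcos (N : ℕ) (hN : 2 ≤ N) :
    ∑ j ∈ Finset.range N, Real.cos (2 * Real.pi * j / N) = 0 := by
  have hprim : IsPrimitiveRoot (Complex.exp (2 * Real.pi * Complex.I / N)) N :=
    Complex.isPrimitiveRoot_exp N (by omega)
  set z := Complex.exp (2 * Real.pi * Complex.I / N) with hz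
  have hz1 : z ≠ 1 := hprim.ne_one (by omega)
  have hzN : z ^ N = 1 := hprim.pow_eq_one
  have hsum : ∑ j ∈ Finset.range N, z ^ j = 0 := by
    rw [geom_sum_eq hz1, hzN, sub_self, zero_div]
  have hre : ∀ j : ℕ, (z ^ j).re = Real.cos (2 * Real.pi * j / N) := by
    intro j
    rw [hz, ← Complex.exp_nat_mul]
    have : (j : ℂ) * (2 * Real.pi * Complex.I / N) = ((2 * Real.pi * j / N : ℝ) : ℂ) * Complex.I := by
      push_cast; ring
    rw [this, Complex.exp_ofReal_mul_I_re]
  calc ∑ j ∈ Finset.range N, Real.cos (2 * Real.pi * j / N)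
      = (∑ j ∈ Finset.range N, z ^ j).re := by
        rw [Complex.re_sum]; exact Finset.sum_congr rfl fun j _ => (hre j).symm
    _ = 0 := by rw [hsum]; rfl

/-- With `g_k = (2/N) sin²(π(2k+1)/(2N))`, one has
`∑_{k=0}^{N-2} √(g_k g_{k+1}) = 1 - ((N-1)/N)(1 - cos(π/N))`. -/
theorem stmt9 (N : ℕ) (hN : 2 ≤ N) :
    ∑ k ∈ Finset.range (N - 1),
        Real.sqrt (((2 / (N : ℝ)) * Real.sin (Real.pi * (2 * (k : ℝ) + 1) / (2 * (N : ℝ))) ^ 2)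
          * ((2 / (N : ℝ)) * Real.sin (Real.pi * (2 * ((k : ℝ) + 1) + 1) / (2 * (N : ℝ))) ^ 2))
      = 1 - ((N : ℝ) - 1) / (N : ℝ) * (1 - Real.cos (Real.pi / (N : ℝ))) := by
  have hNR : (0 : ℝ) < N := by positivity
  have hNne : (N : ℝ) ≠ 0 := ne_of_gt hNR
  -- per-term identity
  have hterm : ∀ k ∈ Finset.range (N - 1),
      Real.sqrt (((2 / (N : ℝ)) * Real.sin (Real.pi * (2 * (k : ℝ) + 1) / (2 * (N : ℝ))) ^ 2)
          * ((2 / (N : ℝ)) * Real.sin (Real.pi * (2 * ((k : ℝ) + 1) + 1) / (2 * (N : ℝ))) ^ 2))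
      = (1 / N) * (Real.cos (Real.pi / N) - Real.cos (2 * Real.pi * ((k : ℝ) + 1) / N)) := by
    intro k hk
    have hk' : (k : ℝ) ≤ (N : ℝ) - 2 := by
      have : k ≤ N - 2 := by simp [Finset.mem_range] at hk; omega
      have := (Nat.cast_le (α := ℝ)).2 this
      have h2 : ((N - 2 : ℕ) : ℝ) = (N : ℝ) - 2 := by
        push_cast [Nat.cast_sub (by omega : 2 ≤ N)]; ring
      linarith [h2 ▸ this]
    set A := Real.pi * (2 * (k : ℝ) + 1) / (2 * (N : ℝ)) with hA
    set B := Real.pi * (2 * ((k : ℝ) + 1) + 1) / (2 * (N : ℝ)) with hB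
    have hkpos : (0:ℝ) ≤ (k:ℝ) := Nat.cast_nonneg k
    have hsA : 0 ≤ Real.sin A := by
      apply Real.sin_nonneg_of_nonneg_of_le_pi
      · positivity
      · rw [hA, div_le_iff₀ (by positivity)]
        nlinarith [Real.pi_pos]
    have hsB : 0 ≤ Real.sin B := by
      apply Real.sin_nonneg_of_nonneg_of_le_pi
      · positivity
      · rw [hB, div_le_iff₀ (by positivity)]
        nlinarith [Real.pi_pos]
    have hsq : ((2 / (N : ℝ)) * Real.sin A ^ 2) * ((2 / (N : ℝ)) * Real.sin B ^ 2)
        = ((2 / N) * (Real.sin A * Real.sin B)) ^ 2 := by ring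
    rw [hsq, Real.sqrt_sq (by positivity)]
    have hprod : Real.sin A * Real.sin B
        = (Real.cos (B - A) - Real.cos (A + B)) / 2 := by
      rw [Real.cos_sub, Real.cos_add]; ring
    have hBA : B - A = Real.pi / N := by
      rw [hA, hB]; field_simp; ring
    have hAB : A + B = 2 * Real.pi * ((k : ℝ) + 1) / N := by
      rw [hA, hB]; field_simp; ring
    rw [hprod, hBA, hAB]; ring
  rw [Finset.sum_congr rfl hterm]
  -- shift the cosine sum
  have hshift : ∑ k ∈ Finset.range (N - 1), Real.cos (2 * Real.pi * ((k : ℝ) + 1) / N) = -1 := by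
    have hS := sumcos N hN
    have hN1 : N - 1 + 1 = N := by omega
    rw [← hN1, Finset.sum_range_succ', hN1] at hS
    have : ∀ k ∈ Finset.range (N-1),
        Real.cos (2 * Real.pi * (((k + 1 : ℕ)) : ℝ) / N) = Real.cos (2 * Real.pi * ((k : ℝ) + 1) / N) := by
      intro k _; push_cast; ring_nf
    rw [Finset.sum_congr rfl this] at hS
    simp at hS
    linarith
  simp only [mul_sub]
  rw [Finset.sum_sub_distrib, ← Finset.mul_sum, ← Finset.mul_sum, hshift, Finset.sum_const, Finset.card_range,
    nsmul_eq_mul]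
  have hc : ((N - 1 : ℕ) : ℝ) = (N : ℝ) - 1 := by
    push_cast [Nat.cast_sub (by omega : 1 ≤ N)]; ring
  rw [hc]; field_simp; ring
end

section
/- For all integers d ≥ 1, n ≥ 0 and every α ∈ Y(d,n): Σ_{i ∈ {1,…,d} such that α + e_i ∈ Y(d,n+1)} Π_{1 ≤ i' < j' ≤ d} ((α+e_i)_{i'} − (α+e_i)_{j'} − i' + j') = d · Π_{1 ≤ i' < j' ≤ d} (α_{i'} − α_{j'} − i' + j'). Equivalently, with the Weyl dimension polynomial D_d(α) := Π_{1≤i<j≤d}(α_i − α_j − i + j)/Π_{k=1}^{d−1} k!, one has Σ_{μ ∈ α+□} D_d(μ) = d · D_d(α), the dimension form of the Pieri rule used in Theorem 3 (Σ_{μ∈α+□} d_μ^{(d)} = d · d_α^{(d)}). -/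
open scoped Classical

noncomputable section

/-- The Weyl numerator `∏_{1 ≤ i < j ≤ d} (α_i - α_j - i + j)`.  With 0-based indices
`i, j`, the factor `-i + j` (for the 1-based indices) is `(j : ℤ) - (i : ℤ)`. -/
def weylProd (d : ℕ) (α : Fin d → ℤ) : ℤ :=
  ∏ p ∈ Finset.univ.filter (fun p : Fin d × Fin d => p.1 < p.2),
    (α p.1 - α p.2 + (((p.2 : ℕ) : ℤ) - ((p.1 : ℕ) : ℤ)))

open Finset Polynomial

variable {F : Type*} [Field F] {ι : Type*} [DecidableEq ι]

lemma coeff_lagrange_basis (s : Finset ι) (v : ι → F) (hvs : Set.InjOn v s) {i : ι}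
    (hi : i ∈ s) :
    (Lagrange.basis s v i).coeff (s.card - 1) = ∏ j ∈ s.erase i, (v i - v j)⁻¹ := by
  have hnd : (Lagrange.basis s v i).natDegree = s.card - 1 := Lagrange.natDegree_basis hvs hi
  have h1 : (Lagrange.basis s v i).coeff (s.card - 1) = (Lagrange.basis s v i).leadingCoeff := by
    rw [Polynomial.leadingCoeff, hnd]
  rw [h1, Lagrange.basis, Polynomial.leadingCoeff_prod]
  refine Finset.prod_congr rfl fun j hj => ?_
  have hne : v i ≠ v j := fun h =>
    (Finset.mem_erase.mp hj).1 (hvs (Finset.mem_of_mem_erase hj) hi h.symm)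
  rw [Lagrange.basisDivisor, Polynomial.leadingCoeff_mul, Polynomial.leadingCoeff_C,
    Polynomial.leadingCoeff_X_sub_C, mul_one]

lemma sum_eval_mul_prod_inv (s : Finset ι) (v : ι → F) (hvs : Set.InjOn v s)
    (p : F[X]) (hp : p.degree < s.card) :
    ∑ i ∈ s, p.eval (v i) * ∏ j ∈ s.erase i, (v i - v j)⁻¹ = p.coeff (s.card - 1) := by
  conv_rhs => rw [Lagrange.eq_interpolate hvs hp]
  rw [Lagrange.interpolate_apply, Polynomial.finset_sum_coeff]
  refine (Finset.sum_congr rfl fun i hi => ?_).symm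
  rw [Polynomial.coeff_C_mul, coeff_lagrange_basis s v hvs hi]

lemma sum_prod_shift {d : ℕ} (hd : 1 ≤ d) (y : Fin d → ℚ) (hy : Function.Injective y) :
    ∑ i : Fin d, ((∏ j ∈ Finset.univ.erase i, (y i - y j + 1)) *
      ∏ j ∈ Finset.univ.erase i, (y i - y j)⁻¹) = (d : ℚ) := by
  set f : ℚ[X] := ∏ j : Fin d, (X - C (y j)) with hf
  set g : ℚ[X] := ∏ j : Fin d, (X - C (y j - 1)) with hg
  have hmf : f.Monic := monic_prod_of_monic _ _ fun j _ => monic_X_sub_C _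
  have hmg : g.Monic := monic_prod_of_monic _ _ fun j _ => monic_X_sub_C _
  have hdf : f.natDegree = d := by
    rw [hf, natDegree_prod_of_monic _ _ fun j _ => monic_X_sub_C _]
    simp
  have hdg : g.natDegree = d := by
    rw [hg, natDegree_prod_of_monic _ _ fun j _ => monic_X_sub_C _]
    simp only [natDegree_X_sub_C]
    simp
  have hdeg : (g - f).degree < (Finset.univ : Finset (Fin d)).card := by
    have : (g - f).degree < g.degree :=
      degree_sub_lt (by rw [Polynomial.degree_eq_natDegree hmg.ne_zero,
          Polynomial.degree_eq_natDegree hmf.ne_zero, hdf, hdg]) hmg.ne_zero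
        (by rw [hmf.leadingCoeff, hmg.leadingCoeff])
    rw [Polynomial.degree_eq_natDegree hmg.ne_zero, hdg] at this
    simpa using this
  have hcard : (Finset.univ : Finset (Fin d)).card = d := by simp
  have hcf : f.coeff (d - 1) = ∑ j : Fin d, -(y j) := by
    have h1 : f.nextCoeff = ∑ j : Fin d, -(y j) := by
      rw [hf, Monic.nextCoeff_prod _ _ fun j _ => monic_X_sub_C _]
      simp only [nextCoeff_X_sub_C]
    rw [← h1, nextCoeff_of_natDegree_pos (by rw [hdf]; omega), hdf]
  have hcg : g.coeff (d - 1) = ∑ j : Fin d, -(y j - 1) := by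
    have h1 : g.nextCoeff = ∑ j : Fin d, -(y j - 1) := by
      rw [hg, Monic.nextCoeff_prod _ _ fun j _ => monic_X_sub_C _]
      simp only [nextCoeff_X_sub_C]
    rw [← h1, nextCoeff_of_natDegree_pos (by rw [hdg]; omega), hdg]
  have key := sum_eval_mul_prod_inv Finset.univ y hy.injOn (g - f) hdeg
  rw [hcard] at key
  have heval : ∀ i : Fin d, (g - f).eval (y i) = ∏ j ∈ Finset.univ.erase i, (y i - y j + 1) := by
    intro i
    have hgf : f.eval (y i) = 0 := by
      rw [hf, eval_prod]
      exact Finset.prod_eq_zero (Finset.mem_univ i) (by simp)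
    have hge : g.eval (y i) = ∏ j : Fin d, (y i - y j + 1) := by
      rw [hg, eval_prod]; exact Finset.prod_congr rfl fun j _ => by simp; ring
    rw [eval_sub, hgf, hge, sub_zero, ← Finset.mul_prod_erase _ _ (Finset.mem_univ i)]
    simp
  calc ∑ i : Fin d, ((∏ j ∈ Finset.univ.erase i, (y i - y j + 1)) *
        ∏ j ∈ Finset.univ.erase i, (y i - y j)⁻¹)
      = ∑ i : Fin d, (g - f).eval (y i) * ∏ j ∈ Finset.univ.erase i, (y i - y j)⁻¹ := by
        exact Finset.sum_congr rfl fun i _ => by rw [heval i]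
    _ = (g - f).coeff (d - 1) := key
    _ = (d : ℚ) := by
        rw [coeff_sub, hcf, hcg, ← Finset.sum_sub_distrib]
        simp

def Wq {d : ℕ} (y : Fin d → ℚ) : ℚ :=
  ∏ p ∈ Finset.univ.filter (fun p : Fin d × Fin d => p.1 < p.2), (y p.1 - y p.2)

lemma Wq_add_basis {d : ℕ} (y : Fin d → ℚ) (hy : ∀ i j : Fin d, i < j → y j < y i)
    (i : Fin d) :
    Wq (fun k => y k + if k = i then 1 else 0)
      = Wq y * ((∏ j ∈ Finset.univ.erase i, (y i - y j + 1)) *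
        ∏ j ∈ Finset.univ.erase i, (y i - y j)⁻¹) := by
  classical
  set y' : Fin d → ℚ := fun k => y k + if k = i then 1 else 0 with hy'
  set P : Finset (Fin d × Fin d) := Finset.univ.filter (fun p : Fin d × Fin d => p.1 < p.2)
    with hP
  have hne : ∀ p ∈ P, y p.1 - y p.2 ≠ 0 := by
    intro p hp
    have : p.1 < p.2 := (Finset.mem_filter.mp hp).2
    have := hy p.1 p.2 this
    intro h; rw [sub_eq_zero] at h; exact absurd h (ne_of_gt this)
  set c : Fin d × Fin d → ℚ := fun p => (y' p.1 - y' p.2) * (y p.1 - y p.2)⁻¹ with hc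
  have hsplit : Wq y' = Wq y * ∏ p ∈ P, c p := by
    rw [Wq, Wq, ← Finset.prod_mul_distrib]
    refine Finset.prod_congr rfl fun p hp => ?_
    rw [hc]
    field_simp [hne p hp]
  rw [hsplit]
  congr 1
  have hfilter : ∏ p ∈ P, c p = ∏ p ∈ P.filter (fun p => p.1 = i ∨ p.2 = i), c p := by
    refine (Finset.prod_filter_of_ne ?_).symm
    intro p hp hcp
    by_contra h
    push_neg at h
    apply hcp
    have h1 : y' p.1 = y p.1 := by simp [hy', h.1]
    have h2 : y' p.2 = y p.2 := by simp [hy', h.2]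
    rw [hc]; dsimp only; rw [h1, h2, mul_inv_cancel₀ (hne p hp)]
  rw [hfilter, ← Finset.prod_mul_distrib]
  refine (Finset.prod_bij' (fun (j : Fin d) _ => if j < i then ((j, i) : Fin d × Fin d) else (i, j))
    (fun p _ => if p.1 = i then p.2 else p.1) ?_ ?_ ?_ ?_ ?_).symm
  · intro j hj
    have hji : j ≠ i := Finset.ne_of_mem_erase hj
    by_cases h : j < i
    · rw [if_pos h]
      simp [hP, h]
    · rw [if_neg h]
      have : i < j := lt_of_le_of_ne (not_lt.mp h) (fun hcon => hji hcon.symm)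
      simp [hP, this]
  · intro p hp
    rw [Finset.mem_filter] at hp
    obtain ⟨hp1, hcase⟩ := hp
    rw [hP, Finset.mem_filter] at hp1
    have hlt : p.1 < p.2 := hp1.2
    rcases hcase with h | h
    · rw [if_pos h]
      exact Finset.mem_erase.mpr ⟨by rw [← h]; exact (ne_of_lt hlt).symm, Finset.mem_univ _⟩
    · rw [if_neg (by intro hcon; rw [hcon, h] at hlt; exact lt_irrefl _ hlt)]
      exact Finset.mem_erase.mpr ⟨by rw [← h]; exact ne_of_lt hlt, Finset.mem_univ _⟩
  · intro j hj
    have hji : j ≠ i := Finset.ne_of_mem_erase hj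
    by_cases h : j < i
    · rw [if_pos h]
      simp [hji]
    · rw [if_neg h]
      simp
  · intro p hp
    rw [Finset.mem_filter] at hp
    obtain ⟨hp1, hcase⟩ := hp
    rw [hP, Finset.mem_filter] at hp1
    obtain ⟨a, b⟩ := p
    have hlt : a < b := hp1.2
    rcases hcase with h | h
    · simp only at h
      subst h
      simp [asymm hlt]
    · simp only at h
      subst h
      simp [ne_of_lt hlt, hlt]
  · intro j hj
    have hji : j ≠ i := Finset.ne_of_mem_erase hj
    by_cases h : j < i
    · rw [if_pos h]
      have hyij : y i < y j := hy j i h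
      have h0 : y j - y i ≠ 0 := sub_ne_zero.mpr (ne_of_gt hyij)
      have h0' : y i - y j ≠ 0 := sub_ne_zero.mpr (ne_of_lt hyij)
      rw [hc]; dsimp only
      rw [show y' j = y j by simp [hy', hji], show y' i = y i + 1 by simp [hy']]
      field_simp
      ring
    · rw [if_neg h]
      have hij : i < j := lt_of_le_of_ne (not_lt.mp h) (fun hcon => hji hcon.symm)
      have hyij : y j < y i := hy i j hij
      have h0' : y i - y j ≠ 0 := sub_ne_zero.mpr (ne_of_gt hyij)
      rw [hc]; dsimp only
      rw [show y' i = y i + 1 by simp [hy'], show y' j = y j by simp [hy', hji]]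
      ring

lemma key_sum {d : ℕ} (hd : 1 ≤ d) (y : Fin d → ℚ) (hy : ∀ i j : Fin d, i < j → y j < y i) :
    ∑ i : Fin d, Wq (fun k => y k + if k = i then 1 else 0) = (d : ℚ) * Wq y := by
  have hinj : Function.Injective y := by
    intro a b hab
    by_contra hne
    rcases lt_or_gt_of_ne hne with h | h
    · exact absurd hab.symm (ne_of_lt (hy a b h))
    · exact absurd hab (ne_of_lt (hy b a h))
  calc ∑ i : Fin d, Wq (fun k => y k + if k = i then 1 else 0)
      = ∑ i : Fin d, Wq y * ((∏ j ∈ Finset.univ.erase i, (y i - y j + 1)) *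
          ∏ j ∈ Finset.univ.erase i, (y i - y j)⁻¹) :=
        Finset.sum_congr rfl fun i _ => Wq_add_basis y hy i
    _ = Wq y * ∑ i : Fin d, ((∏ j ∈ Finset.univ.erase i, (y i - y j + 1)) *
          ∏ j ∈ Finset.univ.erase i, (y i - y j)⁻¹) := by rw [Finset.mul_sum]
    _ = Wq y * (d : ℚ) := by rw [sum_prod_shift hd y hinj]
    _ = (d : ℚ) * Wq y := mul_comm _ _

lemma weyl_cast {d : ℕ} (β : Fin d → ℤ) :
    ((weylProd d β : ℤ) : ℚ) = Wq (fun k => (β k : ℚ) - ((k : ℕ) : ℚ)) := by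
  rw [weylProd, Wq]
  push_cast
  exact Finset.prod_congr rfl fun p _ => by ring

lemma weyl_vanish {d n : ℕ} {α : Fin d → ℤ} (hα : α ∈ Ydn d n) {i : Fin d}
    (hmem : α + ebasis d i ∉ Ydn d (n + 1)) : weylProd d (α + ebasis d i) = 0 := by
  rw [Ydn, Finset.mem_filter] at hα
  obtain ⟨hpi, hmono, hnn, hsum⟩ := hα
  have hbox : ∀ j : Fin d, 0 ≤ α j ∧ α j ≤ (n : ℤ) := by
    intro j
    have := Fintype.mem_piFinset.mp hpi j
    rw [Finset.mem_Icc] at this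
    exact this
  have hnotmono : ¬ (∀ j k : Fin d, j ≤ k → (α + ebasis d i) k ≤ (α + ebasis d i) j) := by
    intro hmono'
    apply hmem
    rw [Ydn, Finset.mem_filter]
    refine ⟨?_, hmono', ?_, ?_⟩
    · rw [Fintype.mem_piFinset]
      intro j
      rw [Finset.mem_Icc]
      have := hbox j
      simp only [Pi.add_apply, ebasis]
      constructor
      · have : (0 : ℤ) ≤ if j = i then 1 else 0 := by split <;> omega
        omega
      · have : (if j = i then (1 : ℤ) else 0) ≤ 1 := by split <;> omega
        push_cast
        omega
    · intro j
      have := (hbox j).1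
      simp only [Pi.add_apply, ebasis]
      have : (0 : ℤ) ≤ if j = i then 1 else 0 := by split <;> omega
      omega
    · simp only [Pi.add_apply, ebasis]
      rw [Finset.sum_add_distrib, hsum, Finset.sum_ite_eq' Finset.univ i (fun _ => (1 : ℤ))]
      simp
  push_neg at hnotmono
  obtain ⟨j, k, hjk, hlt⟩ := hnotmono
  simp only [Pi.add_apply, ebasis] at hlt
  have hajk : α k ≤ α j := hmono j k hjk
  have hki : k = i ∧ j ≠ i ∧ α j = α i := by
    by_cases h1 : j = i <;> by_cases h2 : k = i
    · rw [if_pos h1, if_pos h2, h1, h2] at hlt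
      exfalso; omega
    · rw [if_pos h1, if_neg h2, h1] at hlt
      rw [h1] at hajk
      exfalso; omega
    · rw [if_neg h1, if_pos h2, h2] at hlt
      rw [h2] at hajk
      exact ⟨h2, h1, by omega⟩
    · rw [if_neg h1, if_neg h2] at hlt
      exfalso; omega
  obtain ⟨hk, hji, haji⟩ := hki
  subst hk
  have hjlt : (j : ℕ) < (k : ℕ) := by
    rcases lt_or_eq_of_le hjk with h | h
    · exact h
    · exact absurd h hji
  have hk1 : 1 ≤ (k : ℕ) := by omega
  set j' : Fin d := ⟨(k : ℕ) - 1, by omega⟩ with hj'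
  have hvalj' : (j' : ℕ) = (k : ℕ) - 1 := rfl
  have hjj' : j ≤ j' := by
    rw [Fin.le_def, hvalj']
    omega
  have hj'k : j' ≤ k := by
    rw [Fin.le_def, hvalj']
    omega
  have haj' : α j' = α k := le_antisymm (haji ▸ hmono j j' hjj') (hmono j' k hj'k)
  rw [weylProd]
  apply Finset.prod_eq_zero (i := ((j', k) : Fin d × Fin d))
  · rw [Finset.mem_filter]
    refine ⟨Finset.mem_univ _, ?_⟩
    rw [Fin.lt_def]
    show (j' : ℕ) < (k : ℕ)
    rw [hvalj']
    omega
  · have hj'i : j' ≠ k := by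
      intro hcon
      have : (j' : ℕ) = (k : ℕ) := by rw [hcon]
      rw [hvalj'] at this
      omega
    simp only [Pi.add_apply, ebasis, if_neg hj'i, if_pos rfl]
    have hval : ((j' : ℕ) : ℤ) = ((k : ℕ) : ℤ) - 1 := by
      rw [hvalj']
      omega
    rw [haj', hval]
    simp

/-- Dimension form of the Pieri rule: summing the Weyl numerator over the valid
one-box additions `α + e_i ∈ Y(d, n+1)` gives `d` times the Weyl numerator of `α`. -/
theorem stmt13 (d n : ℕ) (hd : 1 ≤ d) (α : Fin d → ℤ) (hα : α ∈ Ydn d n) :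
    (∑ i : Fin d, if α + ebasis d i ∈ Ydn d (n + 1) then weylProd d (α + ebasis d i) else 0)
      = (d : ℤ) * weylProd d α := by
  classical
  have h1 : (∑ i : Fin d, if α + ebasis d i ∈ Ydn d (n + 1) then weylProd d (α + ebasis d i)
      else 0) = ∑ i : Fin d, weylProd d (α + ebasis d i) := by
    refine Finset.sum_congr rfl fun i _ => ?_
    by_cases h : α + ebasis d i ∈ Ydn d (n + 1)
    · rw [if_pos h]
    · rw [if_neg h, weyl_vanish hα h]
  rw [h1]
  -- monotonicity data
  rw [Ydn, Finset.mem_filter] at hα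
  obtain ⟨hpi, hmono, hnn, hsum⟩ := hα
  set yq : Fin d → ℚ := fun k => (α k : ℚ) - ((k : ℕ) : ℚ) with hyq
  have hmono' : ∀ i j : Fin d, i < j → yq j < yq i := by
    intro i j h
    have h1 : α j ≤ α i := hmono i j (le_of_lt h)
    have h2 : (i : ℕ) < (j : ℕ) := h
    have h1' : ((α j : ℤ) : ℚ) ≤ ((α i : ℤ) : ℚ) := by exact_mod_cast h1
    have h2' : ((i : ℕ) : ℚ) + 1 ≤ ((j : ℕ) : ℚ) := by exact_mod_cast h2
    rw [hyq]
    dsimp only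
    linarith
  have hfun : ∀ i : Fin d, (fun k : Fin d => (((α + ebasis d i) k : ℤ) : ℚ) - ((k : ℕ) : ℚ))
      = (fun k : Fin d => yq k + if k = i then 1 else 0) := by
    intro i
    funext k
    simp only [Pi.add_apply, ebasis, hyq]
    push_cast [apply_ite (fun z : ℤ => (z : ℚ))]
    ring
  have hcast : ((∑ i : Fin d, weylProd d (α + ebasis d i) : ℤ) : ℚ)
      = (((d : ℤ) * weylProd d α : ℤ) : ℚ) := by
    calc ((∑ i : Fin d, weylProd d (α + ebasis d i) : ℤ) : ℚ)
        = ∑ i : Fin d, ((weylProd d (α + ebasis d i) : ℤ) : ℚ) := by push_cast; ring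
      _ = ∑ i : Fin d, Wq (fun k : Fin d => yq k + if k = i then 1 else 0) := by
          refine Finset.sum_congr rfl fun i _ => ?_
          rw [weyl_cast, hfun i]
      _ = (d : ℚ) * Wq yq := key_sum hd yq hmono'
      _ = (((d : ℤ) * weylProd d α : ℤ) : ℚ) := by
          rw [Int.cast_mul, Int.cast_natCast, weyl_cast, hyq]
  exact_mod_cast hcast
end
end

section
/- For every integer d ≥ 1 and all θ, θ' ∈ ℝ, the matrix V(θ) satisfies: (i) V(θ)ᵀ · V(θ) = 1_d (the d × d identity matrix), i.e. V(θ) is an isometry ℂ^d → ℂ^{d+1}; (ii) trace(V(θ')ᵀ · V(θ)) = (d−1) + cos(θ − θ'); and consequently (iii) the channel fidelity F_ch(V(θ), V(θ')) := (1/d²)·|trace(V(θ')ᵀ V(θ))|² equals (1 − (2/d)·sin²((θ − θ')/2))². -/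
open scoped Classical
open Matrix

noncomputable section

/-- The `(d+1) × d` real matrix `V(θ)`: `V_{ii} = 1` for `1 ≤ i ≤ d-1` (1-based),
`V_{d,d} = cos θ`, `V_{d+1,d} = sin θ`, and all other entries `0`.  Indices here
are 0-based: rows `0, …, d`, columns `0, …, d-1`. -/
def Vmat (d : ℕ) (θ : ℝ) : Matrix (Fin (d + 1)) (Fin d) ℝ :=
  fun i j =>
    if (j : ℕ) < d - 1 then (if (i : ℕ) = (j : ℕ) then 1 else 0)
    else if (i : ℕ) = d - 1 then Real.cos θ
    else if (i : ℕ) = d then Real.sin θ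
    else 0

lemma Vmat_entry (d : ℕ) (θ θ' : ℝ) (j k : Fin d) :
    ((Vmat d θ')ᵀ * Vmat d θ) j k
      = if j = k then (if (j : ℕ) < d - 1 then 1 else Real.cos (θ - θ')) else 0 := by
  have hd : 1 ≤ d := j.pos
  have hjd : (j : ℕ) < d := j.isLt
  have hkd : (k : ℕ) < d := k.isLt
  simp only [Matrix.mul_apply, Matrix.transpose_apply, Vmat]
  by_cases hj : (j : ℕ) < d - 1 <;> by_cases hk : (k : ℕ) < d - 1
  · -- both columns are standard basis vectors
    rw [Finset.sum_eq_single (⟨(j : ℕ), by omega⟩ : Fin (d + 1))]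
    · by_cases hjk : j = k
      · simp [hjk, hj, hk]
      · have : (j : ℕ) ≠ (k : ℕ) := fun h => hjk (Fin.ext h)
        simp [hj, hk, this, hjk]
    · intro b _ hb
      have : (b : ℕ) ≠ (j : ℕ) := fun h => hb (Fin.ext h)
      simp [hj, this]
    · simp
  · have hjk : j ≠ k := by
      intro h; subst h; exact hk hj
    rw [if_neg hjk]
    apply Finset.sum_eq_zero
    intro i _
    by_cases hij : (i : ℕ) = (j : ℕ)
    · have h1 : (j : ℕ) ≠ d - 1 := by omega
      have h2 : (j : ℕ) ≠ d := by omega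
      simp [hj, hk, hij, h1, h2]
    · simp [hj, hij]
  · have hjk : j ≠ k := by
      intro h; subst h; exact hj hk
    rw [if_neg hjk]
    apply Finset.sum_eq_zero
    intro i _
    by_cases hik : (i : ℕ) = (k : ℕ)
    · have h1 : (k : ℕ) ≠ d - 1 := by omega
      have h2 : (k : ℕ) ≠ d := by omega
      simp [hj, hk, hik, h1, h2]
    · simp [hk, hik]
  · -- both are the rotated column; j = k = d - 1
    have hjk : j = k := Fin.ext (by omega)
    rw [if_pos hjk, if_neg hj]
    have key : ∀ i : Fin (d + 1),
        (if (i : ℕ) = d - 1 then Real.cos θ' else if (i : ℕ) = d then Real.sin θ' else 0) *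
          (if (i : ℕ) = d - 1 then Real.cos θ else if (i : ℕ) = d then Real.sin θ else 0)
        = (if i = (⟨d - 1, by omega⟩ : Fin (d + 1)) then Real.cos θ' * Real.cos θ else 0)
          + (if i = (⟨d, by omega⟩ : Fin (d + 1)) then Real.sin θ' * Real.sin θ else 0) := by
      intro i
      have hne : ¬ (d - 1 = d) := by omega
      have hne' : ¬ (d = d - 1) := by omega
      by_cases h1 : (i : ℕ) = d - 1
      · have e1 : i = (⟨d - 1, by omega⟩ : Fin (d + 1)) := Fin.ext h1
        have e2 : i ≠ (⟨d, by omega⟩ : Fin (d + 1)) := by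
          simp [Fin.ext_iff]; omega
        simp [h1, e1, e2, hne, hne']
      · by_cases h2 : (i : ℕ) = d
        · have e1 : i ≠ (⟨d - 1, by omega⟩ : Fin (d + 1)) := by
            simp [Fin.ext_iff]; omega
          have e2 : i = (⟨d, by omega⟩ : Fin (d + 1)) := Fin.ext h2
          simp [h1, h2, e1, e2, hne, hne']
        · have e1 : i ≠ (⟨d - 1, by omega⟩ : Fin (d + 1)) := by
            simp [Fin.ext_iff]; omega
          have e2 : i ≠ (⟨d, by omega⟩ : Fin (d + 1)) := by
            simp [Fin.ext_iff]; omega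
          simp [h1, h2, e1, e2]
    simp only [if_neg hj, if_neg hk]
    calc (∑ i : Fin (d + 1),
        (if (i : ℕ) = d - 1 then Real.cos θ' else if (i : ℕ) = d then Real.sin θ' else 0) *
          (if (i : ℕ) = d - 1 then Real.cos θ else if (i : ℕ) = d then Real.sin θ else 0))
        = ∑ i : Fin (d + 1),
          ((if i = (⟨d - 1, by omega⟩ : Fin (d + 1)) then Real.cos θ' * Real.cos θ else 0)
          + (if i = (⟨d, by omega⟩ : Fin (d + 1)) then Real.sin θ' * Real.sin θ else 0)) := by
            exact Finset.sum_congr rfl fun i _ => key i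
      _ = Real.cos θ' * Real.cos θ + Real.sin θ' * Real.sin θ := by
            rw [Finset.sum_add_distrib, Finset.sum_ite_eq', Finset.sum_ite_eq']
            simp
      _ = Real.cos (θ - θ') := by
            rw [Real.cos_sub]; ring

/-- `V(θ)` is an isometry, `tr(V(θ')ᵀ V(θ)) = (d-1) + cos(θ-θ')`, and the channel
fidelity `(1/d²)|tr(V(θ')ᵀ V(θ))|²` equals `(1 - (2/d) sin²((θ-θ')/2))²`. -/
theorem stmt14 (d : ℕ) (hd : 1 ≤ d) (θ θ' : ℝ) :
    (Vmat d θ)ᵀ * Vmat d θ = (1 : Matrix (Fin d) (Fin d) ℝ) ∧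
      Matrix.trace ((Vmat d θ')ᵀ * Vmat d θ) = ((d : ℝ) - 1) + Real.cos (θ - θ') ∧
      (1 / (d : ℝ) ^ 2) * |Matrix.trace ((Vmat d θ')ᵀ * Vmat d θ)| ^ 2
        = (1 - (2 / (d : ℝ)) * Real.sin ((θ - θ') / 2) ^ 2) ^ 2 := by
  have hd0 : (d : ℝ) ≠ 0 := by positivity
  have htr : Matrix.trace ((Vmat d θ')ᵀ * Vmat d θ) = ((d : ℝ) - 1) + Real.cos (θ - θ') := by
    rw [Matrix.trace]
    have : ∀ j : Fin d, ((Vmat d θ')ᵀ * Vmat d θ).diag j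
        = 1 + (if j = (⟨d - 1, by omega⟩ : Fin d) then Real.cos (θ - θ') - 1 else 0) := by
      intro j
      rw [Matrix.diag_apply, Vmat_entry, if_pos rfl]
      by_cases hj : (j : ℕ) < d - 1
      · have : j ≠ (⟨d - 1, by omega⟩ : Fin d) := by simp [Fin.ext_iff]; omega
        simp [hj, this]
      · have : j = (⟨d - 1, by omega⟩ : Fin d) := Fin.ext (show (j : ℕ) = d - 1 by have := j.isLt; omega)
        simp [hj, this]
    rw [Finset.sum_congr rfl fun j _ => this j, Finset.sum_add_distrib,
      Finset.sum_ite_eq']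
    simp
    ring
  refine ⟨?_, htr, ?_⟩
  · ext j k
    rw [Vmat_entry, Matrix.one_apply]
    by_cases hjk : j = k
    · subst hjk
      simp [sub_self]
    · simp [hjk]
  · rw [htr, sq_abs]
    have hs : Real.sin ((θ - θ') / 2) ^ 2 = 1 / 2 - Real.cos (2 * ((θ - θ') / 2)) / 2 :=
      Real.sin_sq_eq_half_sub _
    rw [show 2 * ((θ - θ') / 2) = θ - θ' by ring] at hs
    rw [hs]
    field_simp
    ring
end
end

section
/- For every integer d ≥ 1 and every real x with |x| ≤ π: 1 − (1 − (2/d)·sin²(x/2))² ≥ ((d−1)/(π²·d²))·x². (This converts a channel-fidelity bound into a quadratic lower bound on the squared parameter error, and yields 1 − F_ch(V(θ̂), V(θ)) ≥ ((d−1)/(π²d²))·(θ̂ − θ)² for the explicit family of isometries, the key inequality in the van Trees argument for the standard quantum limit of isometry estimation.) -/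
/-- For `d ≥ 1` and `|x| ≤ π`:
`1 - (1 - (2/d) sin²(x/2))² ≥ ((d-1)/(π² d²)) x²`. -/
theorem stmt16 (d : ℕ) (hd : 1 ≤ d) (x : ℝ) (hx : |x| ≤ Real.pi) :
    1 - (1 - (2 / (d : ℝ)) * Real.sin (x / 2) ^ 2) ^ 2
      ≥ ((d : ℝ) - 1) / (Real.pi ^ 2 * (d : ℝ) ^ 2) * x ^ 2 := by
  have hd1 : (1:ℝ) ≤ (d:ℝ) := by exact_mod_cast hd
  have hπ := Real.pi_pos
  -- Jordan inequality applied to |x|/2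
  have habs : Real.sin (|x| / 2) ^ 2 = Real.sin (x / 2) ^ 2 := by
    rcases abs_cases x with ⟨h, _⟩ | ⟨h, _⟩
    · rw [h]
    · rw [h]; rw [neg_div, Real.sin_neg, neg_sq]
  have hj : |x| / Real.pi ≤ Real.sin (|x| / 2) := by
    have := Real.mul_le_sin (x := |x| / 2) (by positivity) (by linarith)
    calc |x| / Real.pi = 2 / Real.pi * (|x| / 2) := by field_simp
      _ ≤ _ := this
  have hj2 : x ^ 2 ≤ Real.pi ^ 2 * Real.sin (x / 2) ^ 2 := by
    rw [← habs]
    have h0 : 0 ≤ |x| / Real.pi := by positivity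
    have := mul_self_le_mul_self h0 hj
    have hx2 : (|x| / Real.pi) * (|x| / Real.pi) = x ^ 2 / Real.pi ^ 2 := by
      rw [div_mul_div_comm, ← sq_abs x]; ring
    rw [hx2] at this
    calc x ^ 2 = x ^ 2 / Real.pi ^ 2 * Real.pi ^ 2 := by field_simp
      _ ≤ Real.sin (|x|/2) * Real.sin (|x|/2) * Real.pi ^ 2 := by
          apply mul_le_mul_of_nonneg_right this (by positivity)
      _ = Real.pi ^ 2 * Real.sin (|x|/2) ^ 2 := by ring
  have hs0 : 0 ≤ Real.sin (x / 2) ^ 2 := sq_nonneg _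
  have hs1 : Real.sin (x / 2) ^ 2 ≤ 1 := Real.sin_sq_le_one _
  rw [ge_iff_le, div_mul_eq_mul_div, div_le_iff₀ (by positivity)]
  have hdpos : (0:ℝ) < (d:ℝ) := by linarith
  have key : 1 - (1 - 2 / (d:ℝ) * Real.sin (x / 2) ^ 2) ^ 2
      = 4 / (d:ℝ)^2 * (Real.sin (x / 2) ^ 2 * ((d:ℝ) - Real.sin (x / 2) ^ 2)) := by
    field_simp; ring
  rw [key]
  have h1 : Real.sin (x / 2) ^ 2 * ((d:ℝ) - 1) ≤
      Real.sin (x / 2) ^ 2 * ((d:ℝ) - Real.sin (x / 2) ^ 2) := by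
    apply mul_le_mul_of_nonneg_left (by linarith) hs0
  have h2 : x ^ 2 / Real.pi ^ 2 * ((d:ℝ) - 1) ≤ Real.sin (x / 2) ^ 2 * ((d:ℝ) - 1) := by
    apply mul_le_mul_of_nonneg_right _ (by linarith)
    rw [div_le_iff₀ (by positivity)]; linarith [hj2]
  calc ((d:ℝ) - 1) * x ^ 2 = x ^ 2 / Real.pi ^ 2 * ((d:ℝ) - 1) * Real.pi ^ 2 := by
        field_simp
    _ ≤ Real.sin (x / 2) ^ 2 * ((d:ℝ) - Real.sin (x / 2) ^ 2) * Real.pi ^ 2 := by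
        apply mul_le_mul_of_nonneg_right (le_trans h2 h1) (by positivity)
    _ ≤ 4 / (d:ℝ)^2 * (Real.sin (x / 2) ^ 2 * ((d:ℝ) - Real.sin (x / 2) ^ 2)) *
        (Real.pi ^ 2 * (d:ℝ) ^ 2) := by
        have : (0:ℝ) ≤ Real.sin (x / 2) ^ 2 * ((d:ℝ) - Real.sin (x / 2) ^ 2) := by
          apply mul_nonneg hs0; linarith
        have h4 : 4 / (d:ℝ)^2 * (Real.sin (x / 2) ^ 2 * ((d:ℝ) - Real.sin (x / 2) ^ 2)) *
            (Real.pi ^ 2 * (d:ℝ) ^ 2)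
            = 4 * (Real.sin (x / 2) ^ 2 * ((d:ℝ) - Real.sin (x / 2) ^ 2) * Real.pi ^ 2) := by
          field_simp
        rw [h4]
        nlinarith [sq_nonneg Real.pi]
end
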